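/- Suppose V_g is L-Lipschitz for some L ≥ 0. Then for every state s ∈ S, the value functions of the two dynamics maps satisfy |V_f(s) − V_g(s)| ≤ L · Σ_{j=0}^∞ γ^{j+1} · dist(f(f^j(s)), g(f^j(s))), where the right-hand side is a value in [0,∞]; in particular, if dist(f(x), g(x)) ≤ ε for all x ∈ S, then |V_f(s) − V_g(s)| ≤ γ·L·ε/(1−γ). -/

import Mathlib

/-- Value function of a dynamics map `f`: `V_f(s) = Σ_t γ^t r(f^t(s))`. -/
noncomputable def val {S : Type*} (f : S → S) (r : S → ℝ) (γ : ℝ) (s : S) : ℝ :=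
  ∑' t : ℕ, γ ^ t * r (f^[t] s)

/-- Hybrid return: follow `f` for the first `j` steps, then `g` thereafter:
`W_j(s) = Σ_{t<j} γ^t r(f^t(s)) + γ^j V_g(f^j(s))`. -/
noncomputable def hyb {S : Type*} (f g : S → S) (r : S → ℝ) (γ : ℝ) (j : ℕ) (s : S) : ℝ :=
  (∑ t ∈ Finset.range j, γ ^ t * r (f^[t] s)) + γ ^ j * val g r γ (f^[j] s)

open scoped ENNReal

/-!
The hybrid returns `W_j(s)` (follow `f` for `j` steps, then `g`) interpolate between
`W_0(s) = V_g(s)` and `lim_j W_j(s) = V_f(s)`. By the Bellman equation for `V_g`, consecutive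
hybrids differ by `γ^{j+1} (V_g(f(f^j s)) - V_g(g(f^j s)))`, which the Lipschitz bound on `V_g`
controls by `L γ^{j+1} dist(f(f^j s), g(f^j s))`. Summing this telescoping series gives the
bound; for a uniform model error `ε` it is dominated by the geometric series `L ε Σ_j γ^{j+1}`.
-/

open Filter Topology

section Discounted

variable {γ R : ℝ} {u : ℕ → ℝ}

lemma norm_pow_mul_le (hγ0 : 0 ≤ γ) (hu : ∀ t, |u t| ≤ R) (t : ℕ) :
    ‖γ ^ t * u t‖ ≤ R * γ ^ t := by
  rw [Real.norm_eq_abs, abs_mul, abs_pow, abs_of_nonneg hγ0, mul_comm]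
  exact mul_le_mul_of_nonneg_right (hu t) (pow_nonneg hγ0 t)

lemma summable_pow_mul_of_abs_le (hγ0 : 0 ≤ γ) (hγ1 : γ < 1) (hu : ∀ t, |u t| ≤ R) :
    Summable fun t => γ ^ t * u t :=
  .of_norm_bounded ((summable_geometric_of_lt_one hγ0 hγ1).mul_left R)
    (norm_pow_mul_le hγ0 hu)

lemma abs_tsum_pow_mul_le (hγ0 : 0 ≤ γ) (hγ1 : γ < 1) (hu : ∀ t, |u t| ≤ R) :
    |∑' t, γ ^ t * u t| ≤ R * (1 - γ)⁻¹ :=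
  tsum_of_norm_bounded ((hasSum_geometric_of_lt_one hγ0 hγ1).mul_left R)
    (norm_pow_mul_le hγ0 hu)

end Discounted

section ValueFunction

variable {S : Type*} {f g : S → S} {r : S → ℝ} {γ R : ℝ}

lemma summable_val (hγ0 : 0 ≤ γ) (hγ1 : γ < 1) (hR : ∀ s, |r s| ≤ R) (s : S) :
    Summable fun t => γ ^ t * r (f^[t] s) :=
  summable_pow_mul_of_abs_le hγ0 hγ1 fun _ => hR _

lemma abs_val_le (hγ0 : 0 ≤ γ) (hγ1 : γ < 1) (hR : ∀ s, |r s| ≤ R) (s : S) :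
    |val f r γ s| ≤ R * (1 - γ)⁻¹ :=
  abs_tsum_pow_mul_le hγ0 hγ1 fun _ => hR _

lemma val_eq_add_mul_val (hγ0 : 0 ≤ γ) (hγ1 : γ < 1) (hR : ∀ s, |r s| ≤ R) (s : S) :
    val g r γ s = r s + γ * val g r γ (g s) := by
  rw [val, (summable_val hγ0 hγ1 hR s).tsum_eq_zero_add, val, ← tsum_mul_left]
  simp only [pow_zero, one_mul, Function.iterate_zero_apply, Function.iterate_succ_apply,
    pow_succ']
  congr 1
  exact tsum_congr fun t => by ring

lemma hyb_zero (s : S) : hyb f g r γ 0 s = val g r γ s := by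
  simp [hyb]

lemma tendsto_hyb (hγ0 : 0 ≤ γ) (hγ1 : γ < 1) (hR : ∀ s, |r s| ≤ R) (s : S) :
    Tendsto (fun j => hyb f g r γ j s) atTop (𝓝 (val f r γ s)) := by
  have hhead : Tendsto (fun j => ∑ t ∈ Finset.range j, γ ^ t * r (f^[t] s)) atTop
      (𝓝 (val f r γ s)) :=
    (summable_val hγ0 hγ1 hR s).hasSum.tendsto_sum_nat
  have htail : Tendsto (fun j => γ ^ j * val g r γ (f^[j] s)) atTop (𝓝 0) := by
    refine squeeze_zero_norm (norm_pow_mul_le hγ0 fun j => abs_val_le hγ0 hγ1 hR (f^[j] s)) ?_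
    simpa using (tendsto_pow_atTop_nhds_zero_of_lt_one hγ0 hγ1).const_mul (R * (1 - γ)⁻¹)
  rw [← add_zero (val f r γ s)]
  exact hhead.add htail

end ValueFunction

section Lipschitz

variable {S : Type*} [PseudoMetricSpace S] {f g : S → S} {r : S → ℝ} {γ R L : ℝ}

lemma dist_hyb_succ_le (hγ0 : 0 ≤ γ) (hγ1 : γ < 1) (hR : ∀ s, |r s| ≤ R)
    (hLip : ∀ s s', |val g r γ s - val g r γ s'| ≤ L * dist s s') (s : S) (j : ℕ) :
    dist (hyb f g r γ j s) (hyb f g r γ (j + 1) s) ≤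
      L * (γ ^ (j + 1) * dist (f (f^[j] s)) (g (f^[j] s))) := by
  have hstep : hyb f g r γ (j + 1) s - hyb f g r γ j s =
      γ ^ (j + 1) * (val g r γ (f (f^[j] s)) - val g r γ (g (f^[j] s))) := by
    simp only [hyb, Finset.sum_range_succ, Function.iterate_succ_apply',
      val_eq_add_mul_val hγ0 hγ1 hR (f^[j] s)]
    ring
  rw [dist_comm, Real.dist_eq, hstep, abs_mul, abs_of_nonneg (pow_nonneg hγ0 _), mul_left_comm]
  exact mul_le_mul_of_nonneg_left (hLip _ _) (pow_nonneg hγ0 _)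

end Lipschitz

/-- If `V_g` is `L`-Lipschitz, then
`|V_f(s) − V_g(s)| ≤ L · Σ_j γ^{j+1} · dist(f(f^j(s)), g(f^j(s)))` (a value in `[0,∞]`);
in particular, if `dist(f(x), g(x)) ≤ ε` for all `x`, then
`|V_f(s) − V_g(s)| ≤ γ·L·ε/(1−γ)`. -/
theorem abs_val_sub_val_le
    {S : Type*} [MetricSpace S]
    (f g : S → S) (r : S → ℝ) (R γ L ε : ℝ)
    (hγ0 : 0 < γ) (hγ1 : γ < 1)
    (hR : ∀ s : S, |r s| ≤ R)
    (hL : 0 ≤ L)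
    (hLip : ∀ s s' : S, |val g r γ s - val g r γ s'| ≤ L * dist s s')
    (s : S) :
    (ENNReal.ofReal |val f r γ s - val g r γ s| ≤
      ENNReal.ofReal L *
        ∑' j : ℕ, ENNReal.ofReal (γ ^ (j + 1) * dist (f (f^[j] s)) (g (f^[j] s)))) ∧
    ((∀ x : S, dist (f x) (g x) ≤ ε) →
      |val f r γ s - val g r γ s| ≤ γ * L * ε / (1 - γ)) := by
  set D : ℕ → ℝ := fun j => γ ^ (j + 1) * dist (f (f^[j] s)) (g (f^[j] s))
  have hlim := tendsto_hyb (f := f) (g := g) hγ0.le hγ1 hR s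
  have hstep := dist_hyb_succ_le (f := f) hγ0.le hγ1 hR hLip s
  have hV : |val f r γ s - val g r γ s| = dist (hyb f g r γ 0 s) (val f r γ s) := by
    rw [hyb_zero, dist_comm, Real.dist_eq]
  refine ⟨?_, fun hε => ?_⟩
  · have hestep (j : ℕ) : edist (hyb f g r γ j s) (hyb f g r γ (j + 1) s) ≤
        ENNReal.ofReal L * ENNReal.ofReal (D j) := by
      rw [edist_dist, ← ENNReal.ofReal_mul hL]
      exact ENNReal.ofReal_le_ofReal (hstep j)
    rw [hV, ← edist_dist, ← ENNReal.tsum_mul_left]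
    exact edist_le_tsum_of_edist_le_of_tendsto₀ _ hestep hlim
  · have hgeom : HasSum (fun j : ℕ => L * (γ ^ (j + 1) * ε)) (γ * L * ε / (1 - γ)) := by
      rw [div_eq_mul_inv]
      exact ((hasSum_geometric_of_lt_one hγ0.le hγ1).mul_left (γ * L * ε)).congr_fun
        fun j => by ring
    have hD (j : ℕ) : L * D j ≤ L * (γ ^ (j + 1) * ε) :=
      mul_le_mul_of_nonneg_left (mul_le_mul_of_nonneg_left (hε _) (pow_nonneg hγ0.le _)) hL
    have hDsum : Summable fun j => L * D j :=
      hgeom.summable.of_nonneg_of_le (fun j => by positivity) hD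
    rw [hV]
    exact (dist_le_tsum_of_dist_le_of_tendsto₀ _ hstep hDsum hlim).trans
      (hDsum.tsum_le_tsum hD hgeom.summable |>.trans_eq hgeom.tsum_eq)
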